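/- arXiv:2106.10903 — 2 statements merged into one kernel-verified Lean document; each statement's English description precedes it below -/
import Mathlib

section
/- Let q = 2^m with m even, m ≥ 4. Define B^u_{σ_{4,2},q+1} as the set of 4-subsets B of U_{q+1} such that σ_{4,2}(B − a) = 0 for some a ∈ U_{q+1}. Then (U_{q+1}, B^u_{σ_{4,2},q+1}) is a 3-(q+1, 4, 2) design. -/
open Finset

attribute [local instance] Classical.propDecidable

/-- The `l`-th elementary symmetric polynomial evaluated on a finite set `B`. -/
noncomputable def esym {F : Type*} [CommRing F] (B : Finset F) (l : ℕ) : F :=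
  ∑ s ∈ B.powersetCard l, ∏ x ∈ s, x

/-- The set of `n`-th roots of unity. -/
def rootsSet (F : Type*) [Monoid F] (n : ℕ) : Set F := {u | u ^ n = 1}

lemma esym_zero {F : Type*} [CommRing F] (s : Finset F) : esym s 0 = 1 := by
  simp [esym, Finset.powersetCard_zero]

lemma esym_of_card_lt {F : Type*} [CommRing F] {s : Finset F} {n : ℕ} (h : s.card < n) :
    esym s n = 0 := by
  unfold esym
  rw [Finset.powersetCard_eq_empty.mpr h, Finset.sum_empty]

lemma esym_insert {F : Type*} [CommRing F] (a : F) (s : Finset F) (h : a ∉ s) (n : ℕ) :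
    esym (insert a s) (n + 1) = esym s (n + 1) + a * esym s n := by
  classical
  unfold esym
  rw [Finset.powersetCard_succ_insert h, Finset.sum_union, Finset.sum_image, Finset.mul_sum]
  · congr 1
    refine Finset.sum_congr rfl fun t ht => ?_
    rw [Finset.prod_insert fun hat => h ((Finset.mem_powersetCard.mp ht).1 hat)]
  · intro t1 h1 t2 h2 he
    have n1 : a ∉ t1 := fun hat => h ((Finset.mem_powersetCard.mp h1).1 hat)
    have n2 : a ∉ t2 := fun hat => h ((Finset.mem_powersetCard.mp h2).1 hat)
    rw [← Finset.erase_insert n1, ← Finset.erase_insert n2, he]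
  · rw [Finset.disjoint_right]
    rintro t ht hts
    obtain ⟨t', ht', rfl⟩ := Finset.mem_image.mp ht
    exact h ((Finset.mem_powersetCard.mp hts).1 (Finset.mem_insert_self a t'))

lemma esym4_two {F : Type*} [CommRing F] (p1 p2 p3 p4 : F)
    (h12 : p1 ≠ p2) (h13 : p1 ≠ p3) (h14 : p1 ≠ p4)
    (h23 : p2 ≠ p3) (h24 : p2 ≠ p4) (h34 : p3 ≠ p4) :
    esym ({p1, p2, p3, p4} : Finset F) 2
      = p1*p2 + p1*p3 + p1*p4 + p2*p3 + p2*p4 + p3*p4 := by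
  classical
  have e4 : ({p4} : Finset F) = insert p4 ∅ := rfl
  have h1 : p1 ∉ ({p2, p3, p4} : Finset F) := by simp [h12, h13, h14]
  have h2 : p2 ∉ ({p3, p4} : Finset F) := by simp [h23, h24]
  have h3 : p3 ∉ ({p4} : Finset F) := by simp [h34]
  have h4 : p4 ∉ (∅ : Finset F) := Finset.notMem_empty _
  have s40 : esym ({p4} : Finset F) 0 = 1 := esym_zero _
  have s41 : esym ({p4} : Finset F) 1 = p4 := by
    rw [e4, show (1:ℕ) = 0 + 1 from rfl, esym_insert p4 ∅ h4 0, esym_zero,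
      esym_of_card_lt (by simp)]
    ring
  have s42 : esym ({p4} : Finset F) 2 = 0 := esym_of_card_lt (by simp)
  have s31 : esym ({p3, p4} : Finset F) 1 = p3 + p4 := by
    rw [show ({p3, p4} : Finset F) = insert p3 {p4} from rfl,
      show (1:ℕ) = 0 + 1 from rfl, esym_insert p3 _ h3 0, s41, s40]
    ring
  have s32 : esym ({p3, p4} : Finset F) 2 = p3 * p4 := by
    rw [show ({p3, p4} : Finset F) = insert p3 {p4} from rfl,
      show (2:ℕ) = 1 + 1 from rfl, esym_insert p3 _ h3 1, s41, s42]
    ring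
  have s21 : esym ({p2, p3, p4} : Finset F) 1 = p2 + p3 + p4 := by
    rw [show ({p2, p3, p4} : Finset F) = insert p2 {p3, p4} from rfl,
      show (1:ℕ) = 0 + 1 from rfl, esym_insert p2 _ h2 0, s31, esym_zero]
    ring
  have s22 : esym ({p2, p3, p4} : Finset F) 2 = p2*p3 + p2*p4 + p3*p4 := by
    rw [show ({p2, p3, p4} : Finset F) = insert p2 {p3, p4} from rfl,
      show (2:ℕ) = 1 + 1 from rfl, esym_insert p2 _ h2 1, s31, s32]
    ring
  rw [show ({p1, p2, p3, p4} : Finset F) = insert p1 {p2, p3, p4} from rfl,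
    show (2:ℕ) = 1 + 1 from rfl, esym_insert p1 _ h1 1, s21, s22]
  ring

set_option maxHeartbeats 2000000 in
theorem aux {F : Type*} [Field F] [CharP F 2] (m : ℕ) (heven : Even m)
    (ω : F) (hω : ω ^ 2 = ω + 1)
    (E : Finset F) (hEU : ↑E ⊆ rootsSet F (2 ^ m + 1)) (hE : E.card = 3) :
    {B : Finset F |
        ↑B ⊆ rootsSet F (2 ^ m + 1) ∧ B.card = 4 ∧
          (∃ a ∈ rootsSet F (2 ^ m + 1),
            esym (B.image (fun b => b - a)) 2 = 0) ∧ E ⊆ B}.ncard = 2 := by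
  haveI : Fact (Nat.Prime 2) := ⟨Nat.prime_two⟩
  have h2 : (2 : F) = 0 := by exact_mod_cast CharP.cast_eq_zero F 2
  set φ : F → F := fun t => t ^ 2 ^ m with hφdef
  have hφadd : ∀ s t : F, φ (s + t) = φ s + φ t := by
    intro s t; simp only [hφdef]; exact add_pow_char_pow s t 2 m
  have hφmul : ∀ s t : F, φ (s * t) = φ s * φ t := by
    intro s t; simp only [hφdef]; exact mul_pow s t _
  have hφone : φ 1 = 1 := by simp only [hφdef]; exact one_pow _
  have hφeq0 : ∀ t : F, φ t = 0 → t = 0 := by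
    intro t ht; simp only [hφdef] at ht
    exact (pow_eq_zero_iff (by positivity : 2 ^ m ≠ 0)).mp ht
  -- omega facts
  have hω3 : ω ^ 3 = 1 := by linear_combination (ω + 1) * hω + ω * h2
  have hm3 : 3 ∣ 2 ^ m - 1 := by
    obtain ⟨j, rfl⟩ := heven
    have h4 : 2 ^ (j + j) = 4 ^ j := by rw [← two_mul, pow_mul]; norm_num
    rw [h4]
    have hmod : 1 ≡ 4 ^ j [MOD 3] := by
      calc (1:ℕ) = 1 ^ j := (one_pow j).symm
      _ ≡ 4 ^ j [MOD 3] := Nat.ModEq.pow j (by decide)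
    exact (Nat.modEq_iff_dvd' (Nat.one_le_pow j 4 (by norm_num))).mp hmod
  have hφω : φ ω = ω := by
    obtain ⟨k, hk⟩ := hm3
    have h1le : 1 ≤ 2 ^ m := Nat.one_le_two_pow
    have h2m : 2 ^ m = 3 * k + 1 := by omega
    show ω ^ 2 ^ m = ω
    rw [h2m, pow_succ, pow_mul, hω3, one_pow, one_mul]
  -- E decomposition
  obtain ⟨x, y, z, hxy, hxz, hyz, hExyz⟩ := Finset.card_eq_three.mp hE
  have hfU : ∀ t : F, t ∈ rootsSet F (2 ^ m + 1) → φ t * t = 1 := by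
    intro t ht
    have h : t ^ (2 ^ m + 1) = 1 := ht
    rw [pow_succ] at h
    exact h
  have hUf : ∀ t : F, φ t * t = 1 → t ∈ rootsSet F (2 ^ m + 1) := by
    intro t ht
    show t ^ (2 ^ m + 1) = 1
    rw [pow_succ]
    exact ht
  have hne0 : ∀ t : F, φ t * t = 1 → t ≠ 0 := by
    intro t ht h0; rw [h0, mul_zero] at ht; exact zero_ne_one ht
  have hxE : x ∈ E := by rw [hExyz]; exact Finset.mem_insert_self _ _
  have hyE : y ∈ E := by
    rw [hExyz]; exact Finset.mem_insert_of_mem (Finset.mem_insert_self _ _)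
  have hzE : z ∈ E := by
    rw [hExyz]
    exact Finset.mem_insert_of_mem (Finset.mem_insert_of_mem (Finset.mem_singleton_self _))
  have hfx : φ x * x = 1 := hfU x (hEU (Finset.mem_coe.mpr hxE))
  have hfy : φ y * y = 1 := hfU y (hEU (Finset.mem_coe.mpr hyE))
  have hfz : φ z * z = 1 := hfU z (hEU (Finset.mem_coe.mpr hzE))
  have hx0 : x ≠ 0 := hne0 x hfx
  have hy0 : y ≠ 0 := hne0 y hfy
  have hz0 : z ≠ 0 := hne0 z hfz
  have hxyz0 : x * y * z ≠ 0 := mul_ne_zero (mul_ne_zero hx0 hy0) hz0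
  have hadd_eq : ∀ s t : F, s + t = 0 → s = t := by
    intro s t h; linear_combination h - t * h2
  -- polynomial identities
  have I1x : (x+y)*(x+z) = (y*z+(ω+1)*z*x+ω*x*y) + x*(x+(ω+1)*y+ω*z) := by
    linear_combination (-x*z*ω - x*y*ω) * h2
  have I1y : (x+y)*(y+z) = ω*((y*z+(ω+1)*z*x+ω*x*y) + y*(x+(ω+1)*y+ω*z)) := by
    linear_combination (-y*z - y ^ 2 - x*z - x*y) * hω + (-y*z*ω - y ^ 2*ω - x*z*ω - x*y*ω) * h2
  have I1z : (x+z)*(y+z) = (ω+1)*((y*z+(ω+1)*z*x+ω*x*y) + z*(x+(ω+1)*y+ω*z)) := by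
    linear_combination (-z ^ 2 - y*z - x*z - x*y) * hω + (-z ^ 2*ω - y*z - 2*y*z*ω - x*z - 2*x*z*ω - x*y*ω) * h2
  have J1x : (x+y)*(x+z) = (y*z+ω*z*x+(ω+1)*x*y) + x*(x+ω*y+(ω+1)*z) := by
    linear_combination (-x*z*ω - x*y*ω) * h2
  have J1y : (x+y)*(y+z) = (ω+1)*((y*z+ω*z*x+(ω+1)*x*y) + y*(x+ω*y+(ω+1)*z)) := by
    linear_combination (-y*z - y ^ 2 - x*z - x*y) * hω + (-y*z - 2*y*z*ω - y ^ 2*ω - x*z*ω - x*y - 2*x*y*ω) * h2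
  have J1z : (x+z)*(y+z) = ω*((y*z+ω*z*x+(ω+1)*x*y) + z*(x+ω*y+(ω+1)*z)) := by
    linear_combination (-z ^ 2 - y*z - x*z - x*y) * hω + (-z ^ 2*ω - y*z*ω - x*z*ω - x*y*ω) * h2
  have Ibig : (x+y)*(y+z)*(z+x)
      = (y*z+(ω+1)*z*x+ω*x*y)*(x+ω*y+(ω+1)*z) + (y*z+ω*z*x+(ω+1)*x*y)*(x+(ω+1)*y+ω*z) := by
    linear_combination (-2*x*z ^ 2 - 4*x*y*z - 2*x*y ^ 2) * hω + (-y*z ^ 2*ω - y ^ 2*z*ω - x*z ^ 2 - 2*x*z ^ 2*ω - 2*x*y*z - 4*x*y*z*ω - x*y ^ 2 - 2*x*y ^ 2*ω - x ^ 2*z*ω - x ^ 2*y*ω) * h2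
  -- P, Pb nonzero
  have hPnz : (x+(ω+1)*y+ω*z) ≠ 0 := by
    intro hP
    have hxv : x = (ω+1)*y + ω*z := by linear_combination hP - ((ω+1)*y + ω*z) * h2
    have hfxv : φ x = (ω + 1) * φ y + ω * φ z := by
      rw [hxv]
      simp only [hφadd, hφmul, hφω, hφone]
    have hfc : ((ω + 1) * φ y + ω * φ z) * ((ω+1)*y + ω*z) = 1 := by
      rw [← hfxv, ← hxv]; exact hfx
    have hyz0 : (y+z)*(y+z) = 0 := by
      linear_combination (-(y*z)) * hfc + (z ^ 2 + 2*z ^ 2*ω + y*z + 2*y*z*ω + y*z*ω ^ 2) * hfy + (y*z + y*z*ω + y ^ 2*ω + y ^ 2*ω ^ 2) * hfz + (y*z + y*z ^ 2*(φ z) + y*z ^ 2*(φ y) + y ^ 2) * hω + (z ^ 2 + z ^ 2*ω + 2*y*z + 2*y*z*ω + y ^ 2 + y ^ 2*ω) * h2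
    exact hyz (hadd_eq y z (mul_self_eq_zero.mp hyz0))
  have hPbnz : (x+ω*y+(ω+1)*z) ≠ 0 := by
    intro hP
    have hxv : x = ω*y + (ω+1)*z := by linear_combination hP - (ω*y + (ω+1)*z) * h2
    have hfxv : φ x = ω * φ y + (ω + 1) * φ z := by
      rw [hxv]
      simp only [hφadd, hφmul, hφω, hφone]
    have hfc : (ω * φ y + (ω + 1) * φ z) * (ω*y + (ω+1)*z) = 1 := by
      rw [← hfxv, ← hxv]; exact hfx
    have hyz0 : (y+z)*(y+z) = 0 := by
      linear_combination (-(y*z)) * hfc + (z ^ 2 + 2*z ^ 2*ω + y*z*ω ^ 2) * hfy + (y*z + 2*y*z*ω + y*z*ω ^ 2 + y ^ 2*ω + y ^ 2*ω ^ 2) * hfz + (2*y*z + y*z ^ 2*(φ y) + y ^ 2) * hω + (z ^ 2 + z ^ 2*ω + 2*y*z + 2*y*z*ω + y ^ 2 + y ^ 2*ω) * h2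
    exact hyz (hadd_eq y z (mul_self_eq_zero.mp hyz0))
  -- Frobenius images of P, Q, Pb, Qb
  have hφPm : φ (x+(ω+1)*y+ω*z) * (x*y*z) = (y*z+(ω+1)*z*x+ω*x*y) := by
    have e : φ (x+(ω+1)*y+ω*z) = φ x + (ω + 1) * φ y + ω * φ z := by
      simp only [hφadd, hφmul, hφω, hφone]
    rw [e]
    linear_combination (y*z) * hfx + (x*z + x*z*ω) * hfy + (x*y*ω) * hfz
  have hφQm : φ (y*z+(ω+1)*z*x+ω*x*y) * (x*y*z) = (x+(ω+1)*y+ω*z) := by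
    have e : φ (y*z+(ω+1)*z*x+ω*x*y) = φ y * φ z + (ω + 1) * φ z * φ x + ω * φ x * φ y := by
      simp only [hφadd, hφmul, hφω, hφone]
    rw [e]
    linear_combination (y + y*z*ω*(φ z) + y*z*ω*(φ y)) * hfx + (z*ω + x*z*(φ z)) * hfy + (y*ω + x + x*y*(φ x)) * hfz
  have hφPbm : φ (x+ω*y+(ω+1)*z) * (x*y*z) = (y*z+ω*z*x+(ω+1)*x*y) := by
    have e : φ (x+ω*y+(ω+1)*z) = φ x + ω * φ y + (ω + 1) * φ z := by
      simp only [hφadd, hφmul, hφω, hφone]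
    rw [e]
    linear_combination (y*z) * hfx + (x*z*ω) * hfy + (x*y + x*y*ω) * hfz
  have hφQbm : φ (y*z+ω*z*x+(ω+1)*x*y) * (x*y*z) = (x+ω*y+(ω+1)*z) := by
    have e : φ (y*z+ω*z*x+(ω+1)*x*y) = φ y * φ z + ω * φ z * φ x + (ω + 1) * φ x * φ y := by
      simp only [hφadd, hφmul, hφω, hφone]
    rw [e]
    linear_combination (z + y*z*ω*(φ z) + y*z*ω*(φ y)) * hfx + (z*ω + x*z*(φ z) + x*z*(φ x)) * hfy + (y*ω + x) * hfz
  -- Q, Qb nonzero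
  have hQnz : (y*z+(ω+1)*z*x+ω*x*y) ≠ 0 := by
    intro hQ
    have h' := hφPm
    rw [hQ] at h'
    exact hPnz (hφeq0 _ ((mul_eq_zero.mp h').resolve_right hxyz0))
  have hQbnz : (y*z+ω*z*x+(ω+1)*x*y) ≠ 0 := by
    intro hQ
    have h' := hφPbm
    rw [hQ] at h'
    exact hPbnz (hφeq0 _ ((mul_eq_zero.mp h').resolve_right hxyz0))
  have hφPnz : φ (x+(ω+1)*y+ω*z) ≠ 0 := fun h => hPnz (hφeq0 _ h)
  have hφPbnz : φ (x+ω*y+(ω+1)*z) ≠ 0 := fun h => hPbnz (hφeq0 _ h)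
  -- the two roots
  obtain ⟨w1, hw1def⟩ : ∃ v : F, v = (y*z+(ω+1)*z*x+ω*x*y) / (x+(ω+1)*y+ω*z) := ⟨_, rfl⟩
  obtain ⟨w2, hw2def⟩ : ∃ v : F, v = (y*z+ω*z*x+(ω+1)*x*y) / (x+ω*y+(ω+1)*z) := ⟨_, rfl⟩
  have hPw1 : (x+(ω+1)*y+ω*z) * w1 = (y*z+(ω+1)*z*x+ω*x*y) := by
    rw [hw1def]; field_simp
  have hPbw2 : (x+ω*y+(ω+1)*z) * w2 = (y*z+ω*z*x+(ω+1)*x*y) := by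
    rw [hw2def]; field_simp
  have hfw1 : φ w1 * w1 = 1 := by
    have hdiv : φ w1 = φ (y*z+(ω+1)*z*x+ω*x*y) / φ (x+(ω+1)*y+ω*z) := by
      rw [hw1def]; simp only [hφdef]; exact div_pow _ _ _
    have hsc : φ (y*z+(ω+1)*z*x+ω*x*y) * (y*z+(ω+1)*z*x+ω*x*y) * (x*y*z)
        = φ (x+(ω+1)*y+ω*z) * (x+(ω+1)*y+ω*z) * (x*y*z) := by
      linear_combination (y*z+(ω+1)*z*x+ω*x*y) * hφQm - (x+(ω+1)*y+ω*z) * hφPm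
    have hc := mul_right_cancel₀ hxyz0 hsc
    rw [hdiv, hw1def, div_mul_div_comm, hc, div_self (mul_ne_zero hφPnz hPnz)]
  have hfw2 : φ w2 * w2 = 1 := by
    have hdiv : φ w2 = φ (y*z+ω*z*x+(ω+1)*x*y) / φ (x+ω*y+(ω+1)*z) := by
      rw [hw2def]; simp only [hφdef]; exact div_pow _ _ _
    have hsc : φ (y*z+ω*z*x+(ω+1)*x*y) * (y*z+ω*z*x+(ω+1)*x*y) * (x*y*z)
        = φ (x+ω*y+(ω+1)*z) * (x+ω*y+(ω+1)*z) * (x*y*z) := by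
      linear_combination (y*z+ω*z*x+(ω+1)*x*y) * hφQbm - (x+ω*y+(ω+1)*z) * hφPbm
    have hc := mul_right_cancel₀ hxyz0 hsc
    rw [hdiv, hw2def, div_mul_div_comm, hc, div_self (mul_ne_zero hφPbnz hPbnz)]
  -- key identity
  have hkey : ∀ w : F, φ w * w = 1 →
      ((x+(ω+1)*y+ω*z) * w + (y*z+(ω+1)*z*x+ω*x*y)) * ((x+ω*y+(ω+1)*z) * w + (y*z+ω*z*x+(ω+1)*x*y))
        = φ (x+y+z+w) * (x+y+z+w) * (x*y*z*w)
          + φ (x*y+y*z+z*x+w*(x+y+z)) * (x*y+y*z+z*x+w*(x+y+z)) * (x*y*z*w) := by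
    intro w hfw
    have e1 : φ (x+y+z+w) = φ x + φ y + φ z + φ w := by simp only [hφadd]
    have e2 : φ (x*y+y*z+z*x+w*(x+y+z))
        = φ x * φ y + φ y * φ z + φ z * φ x + φ w * (φ x + φ y + φ z) := by
      simp only [hφadd, hφmul]
    rw [e1, e2]
    linear_combination (-z ^ 2*w ^ 2 - y*z*w ^ 2 - 3*y*z ^ 2*w - y*z ^ 2*w ^ 2*(φ z) - y ^ 2*w ^ 2 - 2*y ^ 2*z*w - y ^ 2*z*w ^ 2*(φ y) - y ^ 2*z ^ 2 - y ^ 2*z ^ 2*w*(φ z) - x*z*w ^ 2 - 3*x*y*z*w - x*y*z*w ^ 2*(φ z) - x*y*z ^ 2 - x*y*z ^ 2*w*(φ y) - x*y ^ 2*z - x*y ^ 2*z*w*(φ z) - x*y ^ 2*z*w*(φ y)) * hfx + (-y*z*w ^ 2 - x*z*w ^ 2 - 2*x*z ^ 2*w - x*z ^ 2*w ^ 2*(φ w) - x*z ^ 2*w ^ 2*(φ z) - x*z ^ 2*w ^ 2*(φ x) - x*y*w ^ 2 - 4*x*y*z*w - x*y*z ^ 2*w*(φ w) - x*y*z ^ 2*w*(φ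 x) - 2*x ^ 2*z*w - x ^ 2*z*w ^ 2*(φ w) - x ^ 2*z*w ^ 2*(φ z) - x ^ 2*z*w ^ 2*(φ x) - x ^ 2*z ^ 2 - x ^ 2*y*w - x ^ 2*y*z*w*(φ w)) * hfy + (-y*z*w ^ 2 - y ^ 2*z*w - x*z*w ^ 2 - 2*x*y*w ^ 2 - 2*x*y*z*w - 2*x*y ^ 2*w - x*y ^ 2*w ^ 2*(φ w) - x*y ^ 2*w ^ 2*(φ y) - x*y ^ 2*w ^ 2*(φ x) - x*y ^ 2*z*w*(φ w) - x*y ^ 2*z*w*(φ y) - x ^ 2*w ^ 2 - 2*x ^ 2*y*w - x ^ 2*y*z*w*(φ w) - x ^ 2*y*z*w*(φ y) - x ^ 2*y*z*w*(φ x) - x ^ 2*y ^ 2*w*(φ w) - x ^ 2*y ^ 2*w*(φ y)) * hfz + (-x*z ^ 2*w - x*y*z*w - 2*x*y*z ^ 2 - x*y*z ^ 2*w*(φ z) - x*y*z ^ 2*w*(φ x) - x*y ^ 2*w - 2*x*y ^ 2*z - x*y ^ 2*z*w*(φ y) - x*y ^ 2*z*w*(φ x) - x*y ^ 2*z ^ 2*(φ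 x) - x ^ 2*z*w - 3*x ^ 2*y*z - x ^ 2*y*z*w*(φ z) - x ^ 2*y*z*w*(φ x) - x ^ 2*y*z ^ 2*(φ y) - x ^ 2*y*z ^ 2*(φ x) - x ^ 2*y ^ 2 - x ^ 2*y ^ 2*z*(φ x)) * hfw + (z ^ 2*w ^ 2 + 2*y*z*w ^ 2 + y ^ 2*w ^ 2 + 2*x*z ^ 2*w + 4*x*y*z*w + 2*x*y ^ 2*w + x ^ 2*z ^ 2 + 2*x ^ 2*y*z + x ^ 2*y ^ 2) * hω + (z ^ 2*w ^ 2*ω + 2*y*z*w ^ 2*ω - y*z ^ 2*w + y*z ^ 2*w*ω + y ^ 2*w ^ 2*ω - y ^ 2*z*w + y ^ 2*z*w*ω - x*z*w ^ 2 + x*z*w ^ 2*ω + 2*x*z ^ 2*w*ω - x*y*w ^ 2 + x*y*w ^ 2*ω - 2*x*y*z*w + 4*x*y*z*w*ω - x*y*z ^ 2 + x*y*z ^ 2*ω + 2*x*y ^ 2*w*ω - x*y ^ 2*z + x*y ^ 2*z*ω - x ^ 2*z*w + x ^ 2*z*w*ω + x ^ 2*z ^ 2*ω - x ^ 2*y*w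 + x ^ 2*y*w*ω + 2*x ^ 2*y*z*ω + x ^ 2*y ^ 2*ω) * h2
  -- esym computation
  have hesymval : ∀ w a : F, w ≠ x → w ≠ y → w ≠ z →
      esym ((insert w E).image (fun b => b - a)) 2
        = (x*y+y*z+z*x+w*(x+y+z)) + a*(x+y+z+w) := by
    intro w a hwx hwy hwz
    have himg : (insert w E).image (fun b => b - a) = {w - a, x - a, y - a, z - a} := by
      rw [hExyz]
      simp only [Finset.image_insert, Finset.image_singleton]
    rw [himg, esym4_two (w-a) (x-a) (y-a) (z-a)
      (fun h => hwx (by linear_combination h)) (fun h => hwy (by linear_combination h))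
      (fun h => hwz (by linear_combination h)) (fun h => hxy (by linear_combination h))
      (fun h => hxz (by linear_combination h)) (fun h => hyz (by linear_combination h))]
    linear_combination (-2*a*w + 3*a ^ 2 - 2*z*a - 2*y*a - 2*x*a) * h2
  -- roots differ from x, y, z
  have hQPx : ∀ v : F, (x+(ω+1)*y+ω*z) * v = (y*z+(ω+1)*z*x+ω*x*y) → v ≠ x := by
    intro v hPv h
    rw [h] at hPv
    have h0 : (x+y)*(x+z) = 0 := by
      linear_combination I1x + hPv + (y*z+(ω+1)*z*x+ω*x*y) * h2
    rcases mul_eq_zero.mp h0 with h' | h'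
    · exact hxy (hadd_eq x y h')
    · exact hxz (hadd_eq x z h')
  have hQPy : ∀ v : F, (x+(ω+1)*y+ω*z) * v = (y*z+(ω+1)*z*x+ω*x*y) → v ≠ y := by
    intro v hPv h
    rw [h] at hPv
    have h0 : (x+y)*(y+z) = 0 := by
      linear_combination I1y + ω * hPv + (ω*(y*z+(ω+1)*z*x+ω*x*y)) * h2
    rcases mul_eq_zero.mp h0 with h' | h'
    · exact hxy (hadd_eq x y h')
    · exact hyz (hadd_eq y z h')
  have hQPz : ∀ v : F, (x+(ω+1)*y+ω*z) * v = (y*z+(ω+1)*z*x+ω*x*y) → v ≠ z := by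
    intro v hPv h
    rw [h] at hPv
    have h0 : (x+z)*(y+z) = 0 := by
      linear_combination I1z + (ω+1) * hPv + ((ω+1)*(y*z+(ω+1)*z*x+ω*x*y)) * h2
    rcases mul_eq_zero.mp h0 with h' | h'
    · exact hxz (hadd_eq x z h')
    · exact hyz (hadd_eq y z h')
  have hQPbx : ∀ v : F, (x+ω*y+(ω+1)*z) * v = (y*z+ω*z*x+(ω+1)*x*y) → v ≠ x := by
    intro v hPv h
    rw [h] at hPv
    have h0 : (x+y)*(x+z) = 0 := by
      linear_combination J1x + hPv + (y*z+ω*z*x+(ω+1)*x*y) * h2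
    rcases mul_eq_zero.mp h0 with h' | h'
    · exact hxy (hadd_eq x y h')
    · exact hxz (hadd_eq x z h')
  have hQPby : ∀ v : F, (x+ω*y+(ω+1)*z) * v = (y*z+ω*z*x+(ω+1)*x*y) → v ≠ y := by
    intro v hPv h
    rw [h] at hPv
    have h0 : (x+y)*(y+z) = 0 := by
      linear_combination J1y + (ω+1) * hPv + ((ω+1)*(y*z+ω*z*x+(ω+1)*x*y)) * h2
    rcases mul_eq_zero.mp h0 with h' | h'
    · exact hxy (hadd_eq x y h')
    · exact hyz (hadd_eq y z h')
  have hQPbz : ∀ v : F, (x+ω*y+(ω+1)*z) * v = (y*z+ω*z*x+(ω+1)*x*y) → v ≠ z := by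
    intro v hPv h
    rw [h] at hPv
    have h0 : (x+z)*(y+z) = 0 := by
      linear_combination J1z + ω * hPv + (ω*(y*z+ω*z*x+(ω+1)*x*y)) * h2
    rcases mul_eq_zero.mp h0 with h' | h'
    · exact hxz (hadd_eq x z h')
    · exact hyz (hadd_eq y z h')
  have hw1x : w1 ≠ x := hQPx w1 hPw1
  have hw1y : w1 ≠ y := hQPy w1 hPw1
  have hw1z : w1 ≠ z := hQPz w1 hPw1
  have hw2x : w2 ≠ x := hQPbx w2 hPbw2
  have hw2y : w2 ≠ y := hQPby w2 hPbw2
  have hw2z : w2 ≠ z := hQPbz w2 hPbw2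
  have hw12 : w1 ≠ w2 := by
    intro h
    have hPbw1 : (x+ω*y+(ω+1)*z) * w1 = (y*z+ω*z*x+(ω+1)*x*y) := by
      rw [h]; exact hPbw2
    have hB0 : (x+y)*(y+z)*(z+x) = 0 := by
      linear_combination Ibig + (x+ω*y+(ω+1)*z) * hPw1 + (x+(ω+1)*y+ω*z) * hPbw1
        + (-2*z ^ 2*w1 - 4*y*z*w1 - 2*y ^ 2*w1 + 4*x*z ^ 2 + 8*x*y*z + 4*x*y ^ 2) * hω
        + (-z ^ 2*w1 - 2*z ^ 2*w1*ω - 3*y*z*w1 - 4*y*z*w1*ω + y*z ^ 2 + 2*y*z ^ 2*ω - y ^ 2*w1 - 2*y ^ 2*w1*ω + y ^ 2*z + 2*y ^ 2*z*ω - x*z*w1 - 2*x*z*w1*ω + 3*x*z ^ 2 + 4*x*z ^ 2*ω - x*y*w1 - 2*x*y*w1*ω + 6*x*y*z + 8*x*y*z*ω + 3*x*y ^ 2 + 4*x*y ^ 2*ω - x ^ 2*w1 + x ^ 2*z + 2*x ^ 2*z*ω + x ^ 2*y + 2*x ^ 2*y*ω) * h2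
    rcases mul_eq_zero.mp hB0 with h' | h'
    · rcases mul_eq_zero.mp h' with h'' | h''
      · exact hxy (hadd_eq x y h'')
      · exact hyz (hadd_eq y z h'')
    · exact hxz (hadd_eq z x h').symm
  -- membership helper
  have hmem : ∀ v : F, φ v * v = 1 → v ≠ x → v ≠ y → v ≠ z →
      ((x+(ω+1)*y+ω*z) * v + (y*z+(ω+1)*z*x+ω*x*y)) * ((x+ω*y+(ω+1)*z) * v + (y*z+ω*z*x+(ω+1)*x*y)) = 0 →
      (↑(insert v E) : Set F) ⊆ rootsSet F (2 ^ m + 1) ∧ (insert v E).card = 4 ∧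
        (∃ a ∈ rootsSet F (2 ^ m + 1),
          esym ((insert v E).image (fun b => b - a)) 2 = 0) ∧ E ⊆ insert v E := by
    intro v hfv hvx hvy hvz hveq
    have hvE : v ∉ E := by
      rw [hExyz]
      simp only [Finset.mem_insert, Finset.mem_singleton]
      push_neg
      exact ⟨hvx, hvy, hvz⟩
    have hv0 : v ≠ 0 := hne0 v hfv
    have hX : x * y * z * v ≠ 0 := mul_ne_zero hxyz0 hv0
    refine ⟨?_, ?_, ?_, Finset.subset_insert _ _⟩
    · intro t ht
      rw [Finset.coe_insert, Set.mem_insert_iff] at ht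
      rcases ht with rfl | ht
      · exact hUf t hfv
      · exact hEU ht
    · rw [Finset.card_insert_of_notMem hvE, hE]
    · have hns : φ (x*y+y*z+z*x+v*(x+y+z)) * (x*y+y*z+z*x+v*(x+y+z))
          = φ (x+y+z+v) * (x+y+z+v) := by
        have hk := hkey v hfv
        rw [hveq] at hk
        have hsc : φ (x*y+y*z+z*x+v*(x+y+z)) * (x*y+y*z+z*x+v*(x+y+z)) * (x*y*z*v)
            = φ (x+y+z+v) * (x+y+z+v) * (x*y*z*v) := by
          linear_combination -hk - (φ (x+y+z+v) * (x+y+z+v) * (x*y*z*v)) * h2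
        exact mul_right_cancel₀ hX hsc
      by_cases hs1 : (x+y+z+v) = 0
      · have hs2 : (x*y+y*z+z*x+v*(x+y+z)) = 0 := by
          have h0 : φ (x*y+y*z+z*x+v*(x+y+z)) * (x*y+y*z+z*x+v*(x+y+z)) = 0 := by
            rw [hns, hs1, mul_zero]
          rcases mul_eq_zero.mp h0 with h' | h'
          · exact hφeq0 _ h'
          · exact h'
        refine ⟨1, ?_, ?_⟩
        · show (1:F) ^ (2 ^ m + 1) = 1
          exact one_pow _
        · rw [hesymval v 1 hvx hvy hvz, hs1, hs2]
          ring
      · have hφs1nz : φ (x+y+z+v) ≠ 0 := fun h => hs1 (hφeq0 _ h)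
        refine ⟨(x*y+y*z+z*x+v*(x+y+z)) / (x+y+z+v), ?_, ?_⟩
        · apply hUf
          have hdiv : φ ((x*y+y*z+z*x+v*(x+y+z)) / (x+y+z+v))
              = φ (x*y+y*z+z*x+v*(x+y+z)) / φ (x+y+z+v) := by
            simp only [hφdef]; exact div_pow _ _ _
          rw [hdiv, div_mul_div_comm, hns, div_self (mul_ne_zero hφs1nz hs1)]
        · rw [hesymval v _ hvx hvy hvz, div_mul_cancel₀ _ hs1]
          linear_combination (x*y+y*z+z*x+v*(x+y+z)) * h2
  have hveq1 : ((x+(ω+1)*y+ω*z) * w1 + (y*z+(ω+1)*z*x+ω*x*y)) * ((x+ω*y+(ω+1)*z) * w1 + (y*z+ω*z*x+(ω+1)*x*y)) = 0 := by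
    have h0 : (x+(ω+1)*y+ω*z) * w1 + (y*z+(ω+1)*z*x+ω*x*y) = 0 := by
      linear_combination hPw1 + (y*z+(ω+1)*z*x+ω*x*y) * h2
    rw [h0, zero_mul]
  have hveq2 : ((x+(ω+1)*y+ω*z) * w2 + (y*z+(ω+1)*z*x+ω*x*y)) * ((x+ω*y+(ω+1)*z) * w2 + (y*z+ω*z*x+(ω+1)*x*y)) = 0 := by
    have h0 : (x+ω*y+(ω+1)*z) * w2 + (y*z+ω*z*x+(ω+1)*x*y) = 0 := by
      linear_combination hPbw2 + (y*z+ω*z*x+(ω+1)*x*y) * h2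
    rw [h0, mul_zero]
  -- set equality
  have hSeq : {B : Finset F |
      ↑B ⊆ rootsSet F (2 ^ m + 1) ∧ B.card = 4 ∧
        (∃ a ∈ rootsSet F (2 ^ m + 1),
          esym (B.image (fun b => b - a)) 2 = 0) ∧ E ⊆ B}
      = {insert w1 E, insert w2 E} := by
    ext B
    simp only [Set.mem_setOf_eq, Set.mem_insert_iff, Set.mem_singleton_iff]
    constructor
    · rintro ⟨hBU, hB4, ⟨a, haU, haesym⟩, hEB⟩
      have hcard : (B \ E).card = 1 := by
        rw [Finset.card_sdiff_of_subset hEB, hB4, hE]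
      obtain ⟨w, hw⟩ := Finset.card_eq_one.mp hcard
      have hwBE : w ∈ B \ E := hw ▸ Finset.mem_singleton_self w
      have hwB : w ∈ B := (Finset.mem_sdiff.mp hwBE).1
      have hwE : w ∉ E := (Finset.mem_sdiff.mp hwBE).2
      have hBeq : B = insert w E := by
        refine (Finset.eq_of_subset_of_card_le (Finset.insert_subset hwB hEB) ?_).symm
        rw [hB4, Finset.card_insert_of_notMem hwE, hE]
      have hwx : w ≠ x := fun h => hwE (h ▸ hxE)
      have hwy : w ≠ y := fun h => hwE (h ▸ hyE)
      have hwz : w ≠ z := fun h => hwE (h ▸ hzE)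
      have hfw : φ w * w = 1 := hfU w (hBU (Finset.mem_coe.mpr hwB))
      have hfa : φ a * a = 1 := hfU a haU
      rw [hBeq, hesymval w a hwx hwy hwz] at haesym
      have hs2s1 : (x*y+y*z+z*x+w*(x+y+z)) = a*(x+y+z+w) := by
        linear_combination haesym - (a*(x+y+z+w)) * h2
      have hns : φ (x*y+y*z+z*x+w*(x+y+z)) * (x*y+y*z+z*x+w*(x+y+z))
          = φ (x+y+z+w) * (x+y+z+w) := by
        rw [hs2s1, hφmul]
        linear_combination (φ (x+y+z+w) * (x+y+z+w)) * hfa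
      have hzero : ((x+(ω+1)*y+ω*z) * w + (y*z+(ω+1)*z*x+ω*x*y)) * ((x+ω*y+(ω+1)*z) * w + (y*z+ω*z*x+(ω+1)*x*y)) = 0 := by
        rw [hkey w hfw]
        linear_combination (x*y*z*w) * hns + (φ (x+y+z+w) * (x+y+z+w) * (x*y*z*w)) * h2
      rcases mul_eq_zero.mp hzero with hc | hc
      · left
        have hwv : w = w1 := by
          rw [hw1def, eq_div_iff hPnz]
          linear_combination hc - (y*z+(ω+1)*z*x+ω*x*y) * h2
        rw [hBeq, hwv]
      · right
        have hwv : w = w2 := by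
          rw [hw2def, eq_div_iff hPbnz]
          linear_combination hc - (y*z+ω*z*x+(ω+1)*x*y) * h2
        rw [hBeq, hwv]
    · rintro (rfl | rfl)
      · exact hmem w1 hfw1 hw1x hw1y hw1z hveq1
      · exact hmem w2 hfw2 hw2x hw2y hw2z hveq2
  rw [hSeq]
  refine Set.ncard_pair ?_
  intro h
  have hmem1 : w1 ∈ insert w2 E := h ▸ Finset.mem_insert_self w1 E
  rcases Finset.mem_insert.mp hmem1 with h' | h'
  · exact hw12 h'
  · rw [hExyz] at h'
    rcases Finset.mem_insert.mp h' with h'' | h''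
    · exact hw1x h''
    · rcases Finset.mem_insert.mp h'' with h3 | h3
      · exact hw1y h3
      · exact hw1z (Finset.mem_singleton.mp h3)

theorem stmt12 (m : ℕ) (hm : 4 ≤ m) (heven : Even m)
    (E : Finset (GaloisField 2 (2 * m)))
    (hEU : ↑E ⊆ rootsSet (GaloisField 2 (2 * m)) (2 ^ m + 1))
    (hE : E.card = 3) :
    {B : Finset (GaloisField 2 (2 * m)) |
        ↑B ⊆ rootsSet (GaloisField 2 (2 * m)) (2 ^ m + 1) ∧ B.card = 4 ∧
          (∃ a ∈ rootsSet (GaloisField 2 (2 * m)) (2 ^ m + 1),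
            esym (B.image (fun b => b - a)) 2 = 0) ∧ E ⊆ B}.ncard = 2 := by
  haveI : Fact (Nat.Prime 2) := ⟨Nat.prime_two⟩
  haveI : Fact (Nat.Prime 3) := ⟨by norm_num⟩
  haveI : Fintype (GaloisField 2 (2 * m)) := Fintype.ofFinite _
  have h2 : (2 : GaloisField 2 (2 * m)) = 0 := by
    exact_mod_cast CharP.cast_eq_zero (GaloisField 2 (2 * m)) 2
  have hcardF : Nat.card (GaloisField 2 (2 * m)) = 2 ^ (2 * m) :=
    GaloisField.card 2 (2 * m) (by omega)
  have hcardU : Fintype.card (GaloisField 2 (2 * m))ˣ = 2 ^ (2 * m) - 1 := by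
    rw [← Nat.card_eq_fintype_card, Nat.card_units, hcardF]
  have h3dvd : 3 ∣ Fintype.card (GaloisField 2 (2 * m))ˣ := by
    rw [hcardU]
    have h4 : 2 ^ (2 * m) = 4 ^ m := by rw [pow_mul]; norm_num
    rw [h4]
    have hmod : 1 ≡ 4 ^ m [MOD 3] := by
      calc (1:ℕ) = 1 ^ m := (one_pow m).symm
      _ ≡ 4 ^ m [MOD 3] := Nat.ModEq.pow m (by decide)
    exact (Nat.modEq_iff_dvd' (Nat.one_le_pow m 4 (by norm_num))).mp hmod
  obtain ⟨g, hg⟩ := exists_prime_orderOf_dvd_card 3 h3dvd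
  set ω : GaloisField 2 (2 * m) := ((g : (GaloisField 2 (2 * m))ˣ) : GaloisField 2 (2 * m))
    with hωdef
  have hω3 : ω ^ 3 = 1 := by
    rw [hωdef, ← Units.val_pow_eq_pow_val, ← hg, pow_orderOf_eq_one, Units.val_one]
  have hωne1 : ω ≠ 1 := by
    intro h
    have hg1 : g = 1 := Units.ext h
    rw [hg1, orderOf_one] at hg
    norm_num at hg
  have hfac : (ω + 1) * (ω ^ 2 + ω + 1) = 0 := by
    linear_combination hω3 + (ω ^ 2 + ω + 1) * h2
  have hωp1 : ω + 1 ≠ 0 := by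
    intro h
    exact hωne1 (by linear_combination h - h2)
  have hω : ω ^ 2 = ω + 1 := by
    have h0 : ω ^ 2 + ω + 1 = 0 := (mul_eq_zero.mp hfac).resolve_left hωp1
    linear_combination h0 - (ω + 1) * h2
  exact aux m heven ω hω E hEU hE
end

section
/- Let q = 2^m with m ≥ 5 odd. Define B^u_{σ_{5,3},q+1} as the set of 5-subsets B of U_{q+1} such that σ_{5,3}(B − a) = 0 for some a ∈ U_{q+1}. Then B^u_{σ_{5,3},q+1} consists of all 5-subsets of U_{q+1}, i.e., it is a complete 4-design with λ = q − 3. -/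
open Finset

attribute [local instance] Classical.propDecidable

/-!
On `U = U_{q+1}` the Frobenius `x ↦ x ^ q` is inversion, so for a 5-set `B ⊆ U` taking
complements gives `σ₂ ^ q σ₅ = σ₃` and `σ₃ ^ q σ₅ = σ₂`, whence `σ₃ ^ (q + 1) = σ₂ ^ (q + 1)`.
In characteristic 2 the translation formula for elementary symmetric functions reduces to
`σ₃(B - a) = σ₃ + a σ₂`, so `a = σ₃ / σ₂ ∈ U` is a root (if `σ₂ = 0` then `σ₃ = 0` and `a = 1`
works). Hence every 5-subset of `U` qualifies, and a 4-subset `E ⊆ U` lies in exactly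
`|U| - 4 = q - 3` of them, one for each `u ∈ U \ E`.
-/

open Polynomial in
theorem Multiset.esymm_map_add_const {R : Type*} [CommSemiring R] (s : Multiset R) (a : R)
    {k : ℕ} (hk : k ≤ Multiset.card s) :
    (s.map (· + a)).esymm k = ∑ j ∈ Finset.range (Multiset.card s + 1),
      s.esymm j * a ^ (k - j) * (Multiset.card s - j).choose (Multiset.card s - k) := by
  have hprod : (s.map fun x => X + C (x + a)).prod =
      (s.map fun x => X + C x).prod.comp (X + C a) := by
    rw [multiset_prod_comp, Multiset.map_map]
    refine congrArg _ (Multiset.map_congr rfl fun x _ => ?_)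
    simp only [Function.comp_apply, add_comp, X_comp, C_comp, C_add]
    ring
  have h := prod_X_add_C_coeff' s (· + a) (Nat.sub_le (Multiset.card s) k)
  rw [Nat.sub_sub_self hk] at h
  rw [← h, hprod, prod_X_add_C_eq_sum_esymm]
  simp only [Polynomial.sum_comp, mul_comp, C_comp, X_pow_comp, finsetSum_coeff, coeff_C_mul,
    coeff_X_add_C_pow]
  refine Finset.sum_congr rfl fun j _ => ?_
  rw [show Multiset.card s - j - (Multiset.card s - k) = k - j by omega]
  ring

section CommRing

variable {F : Type*} [CommRing F]

theorem esym_eq_esymm (B : Finset F) (l : ℕ) : esym B l = B.val.esymm l := by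
  unfold esym
  simpa using (esymm_map_val id B l).symm

theorem esym_image_sub_three_of_card_eq_five [CharP F 2] {B : Finset F} (hB : B.card = 5)
    (a : F) : esym (B.image (· - a)) 3 = esym B 3 + a * esym B 2 := by
  have hval : (B.image (· - a)).val = B.val.map (· + a) := by
    simp_rw [sub_eq_add_neg, CharTwo.neg_eq]
    exact image_val_of_injOn (add_left_injective a).injOn
  have hcard : Multiset.card B.val = 5 := by rw [card_val, hB]
  rw [esym_eq_esymm, esym_eq_esymm, esym_eq_esymm, hval,
    Multiset.esymm_map_add_const _ _ (by omega), hcard]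
  simp only [sum_range_succ, sum_range_zero]
  norm_num [Nat.choose]
  linear_combination (5 * a ^ 3 * B.val.esymm 0 + 3 * a ^ 2 * B.val.esymm 1 + a * B.val.esymm 2) *
    CharTwo.two_eq_zero (R := F)

theorem esym_pow_mul_esym_card {p n : ℕ} [ExpChar F p] {B : Finset F}
    (hB : ∀ x ∈ B, x ^ (p ^ n + 1) = 1) {l : ℕ} (hl : l ≤ B.card) :
    esym B l ^ p ^ n * esym B B.card = esym B (B.card - l) := by
  unfold esym
  rw [powersetCard_self, sum_singleton, sum_pow_char_pow, sum_mul]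
  refine sum_nbij' (B \ ·) (B \ ·) ?_ ?_ ?_ ?_ ?_
  · intro s hs
    obtain ⟨hsub, hcard⟩ := mem_powersetCard.mp hs
    exact mem_powersetCard.mpr ⟨sdiff_subset, by rw [card_sdiff_of_subset hsub, hcard]⟩
  · intro t ht
    obtain ⟨hsub, hcard⟩ := mem_powersetCard.mp ht
    exact mem_powersetCard.mpr ⟨sdiff_subset, by rw [card_sdiff_of_subset hsub, hcard]; omega⟩
  · exact fun s hs => Finset.sdiff_sdiff_eq_self (mem_powersetCard.mp hs).1
  · exact fun t ht => Finset.sdiff_sdiff_eq_self (mem_powersetCard.mp ht).1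
  · intro s hs
    have hsub := (mem_powersetCard.mp hs).1
    calc (∏ x ∈ s, x) ^ p ^ n * ∏ x ∈ B, x
        = (∏ x ∈ B \ s, x) * ∏ x ∈ s, x ^ (p ^ n + 1) := by
          rw [← prod_sdiff hsub, prod_pow]
          ring
      _ = ∏ x ∈ B \ s, x := by rw [prod_eq_one fun x hx => hB x (hsub hx), mul_one]

end CommRing

theorem exists_mem_rootsSet_esym_image_sub_three_eq_zero {F : Type*} [Field F] [CharP F 2]
    (n : ℕ) {B : Finset F} (hB : ↑B ⊆ rootsSet F (2 ^ n + 1)) (hcard : B.card = 5) :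
    ∃ a ∈ rootsSet F (2 ^ n + 1), esym (B.image (· - a)) 3 = 0 := by
  have hdual : ∀ l ≤ 5, esym B l ^ 2 ^ n * esym B 5 = esym B (5 - l) := fun l hl => by
    simpa only [hcard] using esym_pow_mul_esym_card (fun x hx => hB hx) (hcard ▸ hl)
  have h23 : esym B 2 ^ 2 ^ n * esym B 5 = esym B 3 := hdual 2 (by norm_num)
  have h32 : esym B 3 ^ 2 ^ n * esym B 5 = esym B 2 := hdual 3 (by norm_num)
  simp only [esym_image_sub_three_of_card_eq_five hcard]
  by_cases h2 : esym B 2 = 0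
  · refine ⟨1, one_pow _, ?_⟩
    have h3 : esym B 3 = 0 := by rw [← h23, h2, zero_pow (by positivity), zero_mul]
    rw [h2, h3, mul_zero, add_zero]
  · refine ⟨esym B 3 / esym B 2, ?_, ?_⟩
    · have : esym B 3 ^ (2 ^ n + 1) = esym B 2 ^ (2 ^ n + 1) :=
        calc esym B 3 ^ (2 ^ n + 1) = esym B 2 ^ 2 ^ n * (esym B 3 ^ 2 ^ n * esym B 5) := by
              rw [pow_succ, ← h23]; ring
          _ = esym B 2 ^ (2 ^ n + 1) := by rw [h32, pow_succ]
      show (esym B 3 / esym B 2) ^ (2 ^ n + 1) = 1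
      rw [div_pow, this, div_self (pow_ne_zero _ h2)]
    · rw [div_mul_cancel₀ _ h2, ← two_mul, CharTwo.two_eq_zero, zero_mul]

theorem ncard_setOf_superset_card_eq_succ {α : Type*} {S : Set α} {E : Finset α} (hE : ↑E ⊆ S) :
    {B : Finset α | ↑B ⊆ S ∧ B.card = E.card + 1 ∧ E ⊆ B}.ncard = S.ncard - E.card := by
  have himage : {B : Finset α | ↑B ⊆ S ∧ B.card = E.card + 1 ∧ E ⊆ B} =
      (insert · E) '' (S \ ↑E) := by
    ext B
    simp only [Set.mem_ofPred_eq, Set.mem_image, Set.mem_sdiff, mem_coe]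
    constructor
    · rintro ⟨hBS, hcard, hEB⟩
      obtain ⟨u, hu⟩ := card_eq_one.mp (by rw [card_sdiff_of_subset hEB, hcard]; omega)
      obtain ⟨huB, huE⟩ := mem_sdiff.mp (hu ▸ mem_singleton_self u)
      refine ⟨u, ⟨hBS huB, huE⟩, eq_of_subset_of_card_le (insert_subset huB hEB) ?_⟩
      rw [card_insert_of_notMem huE, hcard]
    · rintro ⟨u, ⟨huS, huE⟩, rfl⟩
      refine ⟨?_, card_insert_of_notMem huE, subset_insert u E⟩
      rw [coe_insert]
      exact Set.insert_subset huS hE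
  have hinj : Set.InjOn (insert · E) (S \ ↑E) := fun u hu v _ (huv : insert u E = insert v E) =>
    (mem_insert.mp (huv ▸ mem_insert_self u E)).resolve_right hu.2
  rw [himage, hinj.ncard_image, Set.ncard_sdiff hE, Set.ncard_coe_finset]

theorem ncard_rootsSet_of_dvd {F : Type*} [Field F] [Finite F] {k : ℕ} (hk : k ≠ 0)
    (hdvd : k ∣ Nat.card F - 1) : (rootsSet F k).ncard = k := by
  obtain ⟨g, hg⟩ := IsCyclic.exists_ofOrder_eq_natCard (α := Fˣ)
  have hkN : k ∣ Nat.card Fˣ := Nat.card_units F ▸ hdvd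
  have hord : orderOf (g ^ (Nat.card Fˣ / k)) = k := by
    rw [orderOf_pow, hg, Nat.gcd_eq_right (Nat.div_dvd_of_dvd hkN),
      Nat.div_div_self hkN Nat.card_pos.ne']
  have hprim : IsPrimitiveRoot ((g ^ (Nat.card Fˣ / k) : Fˣ) : F) k :=
    IsPrimitiveRoot.coe_units_iff.mpr (IsPrimitiveRoot.iff_orderOf.mpr hord)
  have hset : rootsSet F k = ↑(Polynomial.nthRootsFinset k (1 : F)) := by
    ext x
    exact (Polynomial.mem_nthRootsFinset (Nat.pos_of_ne_zero hk) 1).symm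
  rw [hset, Set.ncard_coe_finset, hprim.card_nthRootsFinset]

theorem ncard_rootsSet_galoisField (p : ℕ) [Fact p.Prime] {m : ℕ} (hm : m ≠ 0) :
    (rootsSet (GaloisField p (2 * m)) (p ^ m + 1)).ncard = p ^ m + 1 := by
  refine ncard_rootsSet_of_dvd (by positivity) ⟨p ^ m - 1, ?_⟩
  rw [GaloisField.card p (2 * m) (by omega), pow_mul', ← Nat.sq_sub_sq, one_pow]

theorem stmt14_general (m : ℕ) (hm : 5 ≤ m) :
    ({B : Finset (GaloisField 2 (2 * m)) |
        ↑B ⊆ rootsSet (GaloisField 2 (2 * m)) (2 ^ m + 1) ∧ B.card = 5 ∧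
          ∃ a ∈ rootsSet (GaloisField 2 (2 * m)) (2 ^ m + 1),
            esym (B.image (fun b => b - a)) 3 = 0} =
      {B : Finset (GaloisField 2 (2 * m)) |
        ↑B ⊆ rootsSet (GaloisField 2 (2 * m)) (2 ^ m + 1) ∧ B.card = 5}) ∧
    ∀ E : Finset (GaloisField 2 (2 * m)),
      ↑E ⊆ rootsSet (GaloisField 2 (2 * m)) (2 ^ m + 1) → E.card = 4 →
        {B : Finset (GaloisField 2 (2 * m)) |
          ↑B ⊆ rootsSet (GaloisField 2 (2 * m)) (2 ^ m + 1) ∧ B.card = 5 ∧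
            (∃ a ∈ rootsSet (GaloisField 2 (2 * m)) (2 ^ m + 1),
              esym (B.image (fun b => b - a)) 3 = 0) ∧ E ⊆ B}.ncard =
          2 ^ m - 3 := by
  set U := rootsSet (GaloisField 2 (2 * m)) (2 ^ m + 1)
  have hexists (B : Finset (GaloisField 2 (2 * m))) (hB : ↑B ⊆ U) :=
    exists_mem_rootsSet_esym_image_sub_three_eq_zero m hB
  refine ⟨?_, fun E hE hE4 => ?_⟩
  · ext B
    exact ⟨fun h => ⟨h.1, h.2.1⟩, fun h => ⟨h.1, h.2, hexists B h.1 h.2⟩⟩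
  · have hset : {B | ↑B ⊆ U ∧ B.card = 5 ∧
          (∃ a ∈ U, esym (B.image (fun b => b - a)) 3 = 0) ∧ E ⊆ B} =
        {B | ↑B ⊆ U ∧ B.card = E.card + 1 ∧ E ⊆ B} := by
      ext B
      rw [hE4]
      exact ⟨fun h => ⟨h.1, h.2.1, h.2.2.2⟩, fun h => ⟨h.1, h.2.1, hexists B h.1 h.2.1, h.2.2⟩⟩
    rw [hset, ncard_setOf_superset_card_eq_succ hE, ncard_rootsSet_galoisField 2 (by omega), hE4]
    omega

theorem stmt14 (m : ℕ) (hm : 5 ≤ m) (hodd : Odd m) :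
    ({B : Finset (GaloisField 2 (2 * m)) |
        ↑B ⊆ rootsSet (GaloisField 2 (2 * m)) (2 ^ m + 1) ∧ B.card = 5 ∧
          ∃ a ∈ rootsSet (GaloisField 2 (2 * m)) (2 ^ m + 1),
            esym (B.image (fun b => b - a)) 3 = 0} =
      {B : Finset (GaloisField 2 (2 * m)) |
        ↑B ⊆ rootsSet (GaloisField 2 (2 * m)) (2 ^ m + 1) ∧ B.card = 5}) ∧
    ∀ E : Finset (GaloisField 2 (2 * m)),
      ↑E ⊆ rootsSet (GaloisField 2 (2 * m)) (2 ^ m + 1) → E.card = 4 →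
        {B : Finset (GaloisField 2 (2 * m)) |
          ↑B ⊆ rootsSet (GaloisField 2 (2 * m)) (2 ^ m + 1) ∧ B.card = 5 ∧
            (∃ a ∈ rootsSet (GaloisField 2 (2 * m)) (2 ^ m + 1),
              esym (B.image (fun b => b - a)) 3 = 0) ∧ E ⊆ B}.ncard =
          2 ^ m - 3 :=
  stmt14_general m hm
end
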